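/- (Direct reduction of the general r-th flow.) Let r ≥ 1 be a natural number, c_0 ∈ ℝ, I ⊆ ℝ an open interval, and σ : I → ℝ twice differentiable with σ'(t) > 0 and σ''(t) = -(r+1) c_0 σ'(t)^2 for all t ∈ I. Let ν : ℤ → ℝ be arbitrary, set η(n,t) = ν(n) + σ(t), and let H, G : ℝ → ℝ be differentiable. Let 𝒫_j, 𝒬_j : ℤ × I → ℝ be the sequences obtained by applying the Toda-hierarchy recursion to the pair (Ĥ, Ĝ), where Ĥ(n,t) = H(η(n,t)) and Ĝ(n,t) = G(η(n,t)). Suppose that for all n ∈ ℤ and t ∈ I: -c_0 H(η(n,t)) + H'(η(n,t)) = H(η(n,t))(𝒫_{r+1}(n+1,t) - 𝒫_{r+1}(n,t)) and -c_0 G(η(n,t)) + G'(η(n,t)) = 𝒬_{r+1}(n,t) - 𝒬_{r+1}(n-1,t). Then u(n,t) := σ'(t)^{1/(r+1)} · H(η(n,t)) and v(n,t) := σ'(t)^{1/(r+1)} · G(η(n,t)) are differentiable in t and satisfy the r-th flow TL_r of the Toda hierarchy for all n ∈ ℤ and t ∈ I. -/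

import Mathlib

/-!
Write `λ(t) = σ'(t)^{1/(r+1)}`, so that `u = λ Ĥ` and `v = λ Ĝ`. The recursion is homogeneous
(of degree one in `v` and two in `u`), hence `p_{r+1}` scales by `λ^{r+1} = σ'` and `q_{r+1}` by
`λ^{r+2} = σ' λ`. On the other hand the equation for `σ''` gives exactly `λ' = -c₀ σ' λ`, so
`∂ₜ (λ(t) F(ν + σ(t))) = σ' λ (-c₀ F + F')` at `ν + σ(t)`, and the reduced equations for
`H` and `G` turn this into `TL_r`.
-/

mutual
/-- `p`-sequence of the Toda-hierarchy recursion generated from `(u, v)`: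
`p₀ = 1`, `p_{r+1}(n,t) = (1/2)(q_r(n,t) + q_r(n-1,t)) + v(n,t) p_r(n,t)`. -/
noncomputable def todaP (u v : ℤ × ℝ → ℝ) : ℕ → ℤ × ℝ → ℝ
  | 0, _ => 1
  | (r+1), (n, t) =>
      (1/2) * (todaQ u v r (n, t) + todaQ u v r (n-1, t)) + v (n, t) * todaP u v r (n, t)
termination_by r _ => r

/-- `q`-sequence of the Toda-hierarchy recursion generated from `(u, v)`:
`q₀ = 0`,
`q_{r+1}(n,t) = 2 u(n,t)² Σ_{l=0}^{r} p_{r-l}(n,t) p_l(n+1,t) - (1/2) Σ_{l=0}^{r} q_{r-l}(n,t) q_l(n,t)`. -/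
noncomputable def todaQ (u v : ℤ × ℝ → ℝ) : ℕ → ℤ × ℝ → ℝ
  | 0, _ => 0
  | (r+1), (n, t) =>
      2 * (u (n, t))^2 * ∑ l ∈ (Finset.range (r+1)).attach,
          todaP u v (r - l.1) (n, t) * todaP u v l.1 (n+1, t)
      - (1/2) * ∑ l ∈ (Finset.range (r+1)).attach,
          todaQ u v (r - l.1) (n, t) * todaQ u v l.1 (n, t)
termination_by r _ => r
decreasing_by
  all_goals (try (have hl := l.2; simp only [Finset.mem_range] at hl)); omega
end

/-- The `r`-th flow `TL_r` of the Toda hierarchy, at lattice site `n` and time `t`: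
`∂ₜ u(n,t) = u(n,t)(p_{r+1}(n+1,t) - p_{r+1}(n,t))`,
`∂ₜ v(n,t) = q_{r+1}(n,t) - q_{r+1}(n-1,t)`. -/
def TodaFlow (u v : ℤ × ℝ → ℝ) (r : ℕ) (n : ℤ) (t : ℝ) : Prop :=
  HasDerivAt (fun s => u (n, s))
    (u (n, t) * (todaP u v (r+1) (n+1, t) - todaP u v (r+1) (n, t))) t ∧
  HasDerivAt (fun s => v (n, s))
    (todaQ u v (r+1) (n, t) - todaQ u v (r+1) (n-1, t)) t

theorem todaP_todaQ_of_scale {U V u v : ℤ × ℝ → ℝ} {lam : ℝ → ℝ}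
    (hu : ∀ n t, u (n, t) = lam t * U (n, t)) (hv : ∀ n t, v (n, t) = lam t * V (n, t))
    (j : ℕ) :
    (∀ n t, todaP u v j (n, t) = lam t ^ j * todaP U V j (n, t)) ∧
      (∀ n t, todaQ u v j (n, t) = lam t ^ (j + 1) * todaQ U V j (n, t)) := by
  induction j using Nat.strong_induction_on with
  | _ j ih =>
    match j with
    | 0 => constructor <;> intro n t <;> simp [todaP, todaQ]
    | r + 1 =>
      have hP (l : ℕ) (hl : l ≤ r) := (ih l (by omega)).1
      have hQ (l : ℕ) (hl : l ≤ r) := (ih l (by omega)).2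
      constructor
      · intro n t
        rw [todaP, todaP, hQ r le_rfl, hQ r le_rfl, hP r le_rfl, hv]
        ring
      · intro n t
        have hPP : ∑ l ∈ (Finset.range (r + 1)).attach,
              todaP u v (r - l.1) (n, t) * todaP u v l.1 (n + 1, t) =
            lam t ^ r * ∑ l ∈ (Finset.range (r + 1)).attach,
              todaP U V (r - l.1) (n, t) * todaP U V l.1 (n + 1, t) := by
          rw [Finset.mul_sum]
          refine Finset.sum_congr rfl fun l _ => ?_
          have hl : l.1 ≤ r := Nat.lt_succ_iff.mp (Finset.mem_range.mp l.2)
          rw [hP _ (Nat.sub_le r l.1), hP _ hl, mul_mul_mul_comm, ← pow_add,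
            Nat.sub_add_cancel hl]
        have hQQ : ∑ l ∈ (Finset.range (r + 1)).attach,
              todaQ u v (r - l.1) (n, t) * todaQ u v l.1 (n, t) =
            lam t ^ (r + 2) * ∑ l ∈ (Finset.range (r + 1)).attach,
              todaQ U V (r - l.1) (n, t) * todaQ U V l.1 (n, t) := by
          rw [Finset.mul_sum]
          refine Finset.sum_congr rfl fun l _ => ?_
          have hl : l.1 ≤ r := Nat.lt_succ_iff.mp (Finset.mem_range.mp l.2)
          rw [hQ _ (Nat.sub_le r l.1), hQ _ hl, mul_mul_mul_comm, ← pow_add]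
          congr 2
          omega
        rw [todaQ, todaQ, hu, hPP, hQQ]
        ring

theorem hasDerivAt_rpow_inv_of_deriv_eq_sq {f : ℝ → ℝ} {f' k c₀ t : ℝ} (hk : k ≠ 0)
    (hf : HasDerivAt f f' t) (hpos : 0 < f t) (hode : f' = -k * c₀ * f t ^ 2) :
    HasDerivAt (fun s => f s ^ k⁻¹) (-c₀ * f t * f t ^ k⁻¹) t := by
  convert hf.rpow_const (p := k⁻¹) (Or.inl hpos.ne') using 1
  rw [hode, Real.rpow_sub_one hpos.ne']
  field_simp

theorem hasDerivAt_mul_comp_const_add {lam σ F : ℝ → ℝ} {σ' F' c₀ ν t : ℝ}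
    (hlam : HasDerivAt lam (-c₀ * σ' * lam t) t) (hσ : HasDerivAt σ σ' t)
    (hF : HasDerivAt F F' (ν + σ t)) :
    HasDerivAt (fun s => lam s * F (ν + σ s)) (σ' * lam t * (-c₀ * F (ν + σ t) + F')) t := by
  have hFσ : HasDerivAt (fun s => F (ν + σ s)) (F' * σ') t := hF.comp t (hσ.const_add ν)
  exact (hlam.mul hFσ).congr_deriv (by ring)

/-- Direct reduction of the general `r`-th flow of the Toda hierarchy:
if `σ` solves `σ'' = -(r+1)c₀(σ')²` with `σ' > 0` on an open interval,
`η(n,t) = ν(n) + σ(t)`, and `H, G` solve the reduced `r`-th flow delay-differential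
system built from the Toda-hierarchy recursion applied to `Ĥ(n,t) = H(η(n,t))`,
`Ĝ(n,t) = G(η(n,t))`, then `u(n,t) = σ'(t)^(1/(r+1)) H(η(n,t))`,
`v(n,t) = σ'(t)^(1/(r+1)) G(η(n,t))` solve the flow `TL_r` of the Toda hierarchy. -/
theorem direct_reduction_general_flow
    (r : ℕ) (hr : 1 ≤ r)
    (c₀ a b : ℝ) (σ σ' σ'' : ℝ → ℝ)
    (hσ : ∀ t ∈ Set.Ioo a b, HasDerivAt σ (σ' t) t)
    (hσ' : ∀ t ∈ Set.Ioo a b, HasDerivAt σ' (σ'' t) t)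
    (hσpos : ∀ t ∈ Set.Ioo a b, 0 < σ' t)
    (hode : ∀ t ∈ Set.Ioo a b, σ'' t = -((r : ℝ) + 1) * c₀ * (σ' t)^2)
    (ν : ℤ → ℝ) (η : ℤ → ℝ → ℝ) (hη : ∀ (n : ℤ) (t : ℝ), η n t = ν n + σ t)
    (H G H' G' : ℝ → ℝ)
    (hH : ∀ x : ℝ, HasDerivAt H (H' x) x)
    (hG : ∀ x : ℝ, HasDerivAt G (G' x) x)
    (Hhat Ghat : ℤ × ℝ → ℝ)
    (hHhat : ∀ (n : ℤ) (t : ℝ), Hhat (n, t) = H (η n t))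
    (hGhat : ∀ (n : ℤ) (t : ℝ), Ghat (n, t) = G (η n t))
    (hred₁ : ∀ (n : ℤ), ∀ t ∈ Set.Ioo a b,
      -c₀ * H (η n t) + H' (η n t) =
        H (η n t) * (todaP Hhat Ghat (r+1) (n+1, t) - todaP Hhat Ghat (r+1) (n, t)))
    (hred₂ : ∀ (n : ℤ), ∀ t ∈ Set.Ioo a b,
      -c₀ * G (η n t) + G' (η n t) =
        todaQ Hhat Ghat (r+1) (n, t) - todaQ Hhat Ghat (r+1) (n-1, t))
    (u v : ℤ × ℝ → ℝ)
    (hu : ∀ (n : ℤ) (t : ℝ), u (n, t) = (σ' t) ^ (((r : ℝ) + 1)⁻¹) * H (η n t))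
    (hv : ∀ (n : ℤ) (t : ℝ), v (n, t) = (σ' t) ^ (((r : ℝ) + 1)⁻¹) * G (η n t)) :
    ∀ (n : ℤ), ∀ t ∈ Set.Ioo a b, TodaFlow u v r n t := by
  intro n t ht
  set lam : ℝ → ℝ := fun s => σ' s ^ ((r : ℝ) + 1)⁻¹
  have hlam : HasDerivAt lam (-c₀ * σ' t * lam t) t :=
    hasDerivAt_rpow_inv_of_deriv_eq_sq (by positivity) (hσ' t ht) (hσpos t ht) (hode t ht)
  have hlam_pow : lam t ^ (r + 1) = σ' t := by
    simpa using Real.rpow_inv_natCast_pow (hσpos t ht).le r.succ_ne_zero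
  have hscale := todaP_todaQ_of_scale (U := Hhat) (V := Ghat) (u := u) (v := v) (lam := lam)
    (fun m s => by rw [hu, hHhat]) (fun m s => by rw [hv, hGhat]) (r + 1)
  constructor
  · have hfun : (fun s => u (n, s)) = fun s => lam s * H (ν n + σ s) :=
      funext fun s => by rw [hu, hη]
    rw [hfun, hu, hscale.1, hscale.1, ← mul_sub, hlam_pow]
    convert hasDerivAt_mul_comp_const_add hlam (hσ t ht) (hH (ν n + σ t)) using 1
    rw [← hη, hred₁ n t ht]
    ring
  · have hfun : (fun s => v (n, s)) = fun s => lam s * G (ν n + σ s) :=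
      funext fun s => by rw [hv, hη]
    rw [hfun, hscale.2, hscale.2, ← mul_sub, pow_succ, hlam_pow]
    convert hasDerivAt_mul_comp_const_add hlam (hσ t ht) (hG (ν n + σ t)) using 1
    rw [← hη, hred₂ n t ht]
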